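/- arXiv:1512.09359 — 2 statements merged into one kernel-verified Lean document; each statement's English description precedes it below -/
import Mathlib

section
/- Let q ≥ 2 be a natural number, let α < β be real numbers, and set S = [α, β]. Let u, v, U, V : ℝ → ℝ be functions such that U and V are (q−1)-times continuously differentiable on S and, for every t ∈ S, the (q−1)-th iterated derivative (within S) of U at t equals u(t) and the (q−1)-th iterated derivative (within S) of V at t equals v(t). Assume u and v are linearly independent as functions on S, i.e., for all reals a, b, if a·u(t) + b·v(t) = 0 for every t ∈ S then a = 0 and b = 0. Suppose a₁, b₁, a₂, b₂ are reals and P₁, P₂ are real polynomials with natDegree P₁ ≤ q−2 and natDegree P₂ ≤ q−2, such that a₁·U(t) + b₁·V(t) + P₁(t) = a₂·U(t) + b₂·V(t) + P₂(t) for every t ∈ S. Then a₁ = a₂, b₁ = b₂, and P₁ = P₂. -/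
/-!
Differentiating the identity `a₁ U + b₁ V + P₁ = a₂ U + b₂ V + P₂` on `[α, β]` exactly `q - 1`
times kills both polynomials, since their degree is at most `q - 2`, and leaves
`(a₁ - a₂) u + (b₁ - b₂) v = 0`, so `a₁ = a₂` and `b₁ = b₂` by linear independence. The
polynomials then agree on the infinite set `[α, β]`, hence are equal.
-/

open Polynomial

variable {𝕜 : Type*} [NontriviallyNormedField 𝕜] {s : Set 𝕜} {x : 𝕜}

namespace Polynomial

theorem iteratedDerivWithin_eval (hs : UniqueDiffOn 𝕜 s) (hx : x ∈ s) (n : ℕ) (p : 𝕜[X]) :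
    iteratedDerivWithin n (fun t => p.eval t) s x = (derivative^[n] p).eval x := by
  induction n generalizing p with
  | zero => simp
  | succ n ih =>
    rw [iteratedDerivWithin_succ', Function.iterate_succ_apply, ← ih p.derivative]
    exact iteratedDerivWithin_congr (fun y hy => p.derivWithin (hs y hy)) hx

theorem iteratedDerivWithin_eval_eq_zero (hs : UniqueDiffOn 𝕜 s) (hx : x ∈ s) {n : ℕ}
    {p : 𝕜[X]} (hp : p.natDegree < n) :
    iteratedDerivWithin n (fun t => p.eval t) s x = 0 := by
  rw [iteratedDerivWithin_eval hs hx, iterate_derivative_eq_zero hp, eval_zero]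

end Polynomial

theorem iteratedDerivWithin_linear_combination (hs : UniqueDiffOn 𝕜 s) (hx : x ∈ s) {n : ℕ}
    {f g : 𝕜 → 𝕜} (hf : ContDiffWithinAt 𝕜 n f s x) (hg : ContDiffWithinAt 𝕜 n g s x)
    (a b : 𝕜) :
    iteratedDerivWithin n (fun t => a * f t + b * g t) s x =
      a * iteratedDerivWithin n f s x + b * iteratedDerivWithin n g s x := by
  rw [iteratedDerivWithin_fun_add hx hs (contDiffWithinAt_const.mul hf)
    (contDiffWithinAt_const.mul hg), iteratedDerivWithin_const_mul_field,
    iteratedDerivWithin_const_mul_field]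

theorem Polynomial.eq_of_eqOn_Icc {p r : ℝ[X]} {α β : ℝ} (hαβ : α < β)
    (h : Set.EqOn (fun t => p.eval t) (fun t => r.eval t) (Set.Icc α β)) : p = r :=
  eq_of_infinite_eval_eq p r ((Set.Icc_infinite hαβ).mono h)

/-- Uniqueness of the local GB-spline representation `a·U + b·V + P`
when the knot functions `u`, `v` are linearly independent on `S`. -/
theorem gb_local_rep_unique (q : ℕ) (hq : 2 ≤ q) (α β : ℝ) (hαβ : α < β)
    (u v U V : ℝ → ℝ)
    (hU : ContDiffOn ℝ (q - 1) U (Set.Icc α β))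
    (hV : ContDiffOn ℝ (q - 1) V (Set.Icc α β))
    (hUu : ∀ t ∈ Set.Icc α β, iteratedDerivWithin (q - 1) U (Set.Icc α β) t = u t)
    (hVv : ∀ t ∈ Set.Icc α β, iteratedDerivWithin (q - 1) V (Set.Icc α β) t = v t)
    (hindep : ∀ a b : ℝ, (∀ t ∈ Set.Icc α β, a * u t + b * v t = 0) → a = 0 ∧ b = 0)
    (a₁ b₁ a₂ b₂ : ℝ) (P₁ P₂ : Polynomial ℝ)
    (hP₁ : P₁.natDegree ≤ q - 2) (hP₂ : P₂.natDegree ≤ q - 2)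
    (heq : ∀ t ∈ Set.Icc α β,
      a₁ * U t + b₁ * V t + P₁.eval t = a₂ * U t + b₂ * V t + P₂.eval t) :
    a₁ = a₂ ∧ b₁ = b₂ ∧ P₁ = P₂ := by
  have hS : UniqueDiffOn ℝ (Set.Icc α β) := uniqueDiffOn_Icc hαβ
  have hcast : ((q - 1 : ℕ) : WithTop ℕ∞) = q - 1 := by norm_cast
  rw [← hcast] at hU hV
  have hdiff : Set.EqOn (fun t => (a₁ - a₂) * U t + (b₁ - b₂) * V t)
      (fun t => (P₂ - P₁).eval t) (Set.Icc α β) := fun t ht => by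
    simp only [eval_sub]
    linarith [heq t ht]
  have hdeg : (P₂ - P₁).natDegree < q - 1 :=
    (natDegree_sub_le _ _).trans_lt (by omega)
  have hcomb : ∀ t ∈ Set.Icc α β, (a₁ - a₂) * u t + (b₁ - b₂) * v t = 0 := fun t ht => by
    rw [← hUu t ht, ← hVv t ht,
      ← iteratedDerivWithin_linear_combination hS ht (hU t ht) (hV t ht),
      iteratedDerivWithin_congr hdiff ht, iteratedDerivWithin_eval_eq_zero hS ht hdeg]
  obtain ⟨ha, hb⟩ := hindep _ _ hcomb
  obtain rfl : a₁ = a₂ := sub_eq_zero.mp ha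
  obtain rfl : b₁ = b₂ := sub_eq_zero.mp hb
  exact ⟨rfl, rfl, eq_of_eqOn_Icc hαβ fun t ht => add_left_cancel (heq t ht)⟩
end

section
/- Let t_j < t_{j+1} be real numbers and set S = [t_j, t_{j+1}]. Let A, B : ℝ → ℝ be continuous on S, and let U, V : ℝ → ℝ be functions such that for every t ∈ S, U has derivative A(t) within S at t and V has derivative B(t) within S at t. Let P₁, P₂ be real polynomials, let a₁, b₁, a₂, b₂, c be reals, let δ₁, δ₂ be nonzero reals, and let f₁, f₂ : ℝ → ℝ satisfy f₁(s) = P₁(s) + a₁·A(s) + b₁·B(s) and f₂(s) = P₂(s) + a₂·A(s) + b₂·B(s) for every s ∈ S. Suppose g : ℝ → ℝ satisfies, for every t ∈ S, g(t) = c + δ₁⁻¹·(∫_{t_j}^{t} f₁(s) ds) − δ₂⁻¹·(∫_{t_j}^{t} f₂(s) ds). Then there exists a real polynomial Q with natDegree Q ≤ max(natDegree P₁, natDegree P₂) + 1 such that for every t ∈ S, g(t) = Q(t) + (a₁/δ₁ − a₂/δ₂)·U(t) + (b₁/δ₁ − b₂/δ₂)·V(t). -/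
/-!
If `R` is a polynomial antiderivative of `P`, then `R + a U + b V` is a primitive of
`P + a A + b B` on `[t_j, t_{j+1}]`, so by the fundamental theorem of calculus each integral
in `g` is that primitive minus its value at `t_j`. The values at `t_j` are constants and are
absorbed, together with `c` and the antiderivatives of `P₁`, `P₂`, into the polynomial part.
-/

open Polynomial Set

namespace Polynomial

variable {K : Type*} [Field K]

noncomputable def antiderivative (P : K[X]) : K[X] :=
  ∑ i ∈ Finset.range (P.natDegree + 1), C (P.coeff i / (i + 1)) * X ^ (i + 1)

theorem derivative_antiderivative [CharZero K] (P : K[X]) : derivative (antiderivative P) = P := by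
  conv_rhs => rw [P.as_sum_range_C_mul_X_pow]
  simp only [antiderivative, derivative_sum, derivative_C_mul_X_pow]
  refine Finset.sum_congr rfl fun i _ => ?_
  have hi : ((i : K) + 1) ≠ 0 := by exact_mod_cast i.succ_ne_zero
  push_cast
  rw [div_mul_cancel₀ _ hi]

theorem natDegree_antiderivative_le (P : K[X]) :
    (antiderivative P).natDegree ≤ P.natDegree + 1 :=
  natDegree_sum_le_of_forall_le _ _ fun i hi =>
    (natDegree_C_mul_X_pow_le _ _).trans (by simp at hi; omega)

end Polynomial

theorem intervalIntegral.integral_eq_sub_of_hasDerivWithinAt_Icc {E : Type*}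
    [NormedAddCommGroup E] [NormedSpace ℝ E] [CompleteSpace E] {f F : ℝ → E} {a b t : ℝ}
    (hf : ContinuousOn f (Icc a b)) (hF : ∀ x ∈ Icc a b, HasDerivWithinAt F (f x) (Icc a b) x)
    (ht : t ∈ Icc a b) :
    ∫ s in a..t, f s = F t - F a := by
  have hsub : Icc a t ⊆ Icc a b := Icc_subset_Icc le_rfl ht.2
  refine integral_eq_sub_of_hasDerivAt_of_le ht.1
    (fun x hx => (hF x (hsub hx)).continuousWithinAt.mono hsub) (fun x hx => ?_)
    ((hf.mono hsub).intervalIntegrable_of_Icc ht.1)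
  exact (hF x (hsub (Ioo_subset_Icc_self hx))).hasDerivAt
    (Icc_mem_nhds hx.1 (hx.2.trans_le ht.2))

section LocalRepresentation

variable {S : Set ℝ} {A B U V : ℝ → ℝ}

/-- A primitive of `P + a * A + b * B` on any set where `U' = A` and `V' = B`. -/
noncomputable def localRepPrimitive (U V : ℝ → ℝ) (P : ℝ[X]) (a b : ℝ) (t : ℝ) : ℝ :=
  (antiderivative P).eval t + a * U t + b * V t

theorem hasDerivWithinAt_localRepPrimitive
    (hU : ∀ t ∈ S, HasDerivWithinAt U (A t) S t) (hV : ∀ t ∈ S, HasDerivWithinAt V (B t) S t)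
    (P : ℝ[X]) (a b : ℝ) {t : ℝ} (ht : t ∈ S) :
    HasDerivWithinAt (localRepPrimitive U V P a b) (P.eval t + a * A t + b * B t) S t := by
  have hP := (antiderivative P).hasDerivAt t
  rw [derivative_antiderivative] at hP
  exact (hP.hasDerivWithinAt.add ((hU t ht).const_mul a)).add ((hV t ht).const_mul b)

theorem integral_eq_localRepPrimitive_sub {tj tj1 t : ℝ}
    (hA : ContinuousOn A (Icc tj tj1)) (hB : ContinuousOn B (Icc tj tj1))
    (hU : ∀ t ∈ Icc tj tj1, HasDerivWithinAt U (A t) (Icc tj tj1) t)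
    (hV : ∀ t ∈ Icc tj tj1, HasDerivWithinAt V (B t) (Icc tj tj1) t)
    {P : ℝ[X]} {a b : ℝ} {f : ℝ → ℝ} (hf : ∀ s ∈ Icc tj tj1, f s = P.eval s + a * A s + b * B s)
    (ht : t ∈ Icc tj tj1) :
    ∫ s in tj..t, f s = localRepPrimitive U V P a b t - localRepPrimitive U V P a b tj := by
  have hfc : ContinuousOn f (Icc tj tj1) :=
    ((P.continuous.continuousOn.add (hA.const_smul a)).add (hB.const_smul b)).congr hf
  refine intervalIntegral.integral_eq_sub_of_hasDerivWithinAt_Icc hfc (fun x hx => ?_) ht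
  rw [hf x hx]
  exact hasDerivWithinAt_localRepPrimitive hU hV P a b hx

end LocalRepresentation

theorem gb_recurrence_step_general (tj tj1 : ℝ)
    (A B U V : ℝ → ℝ)
    (hA : ContinuousOn A (Set.Icc tj tj1))
    (hB : ContinuousOn B (Set.Icc tj tj1))
    (hU : ∀ t ∈ Set.Icc tj tj1, HasDerivWithinAt U (A t) (Set.Icc tj tj1) t)
    (hV : ∀ t ∈ Set.Icc tj tj1, HasDerivWithinAt V (B t) (Set.Icc tj tj1) t)
    (P₁ P₂ : Polynomial ℝ) (a₁ b₁ a₂ b₂ c : ℝ) (δ₁ δ₂ : ℝ)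
    (f₁ f₂ g : ℝ → ℝ)
    (hf₁ : ∀ s ∈ Set.Icc tj tj1, f₁ s = P₁.eval s + a₁ * A s + b₁ * B s)
    (hf₂ : ∀ s ∈ Set.Icc tj tj1, f₂ s = P₂.eval s + a₂ * A s + b₂ * B s)
    (hg : ∀ t ∈ Set.Icc tj tj1,
      g t = c + δ₁⁻¹ * (∫ s in tj..t, f₁ s) - δ₂⁻¹ * (∫ s in tj..t, f₂ s)) :
    ∃ Q : Polynomial ℝ, Q.natDegree ≤ max P₁.natDegree P₂.natDegree + 1 ∧
      ∀ t ∈ Set.Icc tj tj1,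
        g t = Q.eval t + (a₁ / δ₁ - a₂ / δ₂) * U t + (b₁ / δ₁ - b₂ / δ₂) * V t := by
  set F₁ := localRepPrimitive U V P₁ a₁ b₁
  set F₂ := localRepPrimitive U V P₂ a₂ b₂
  refine ⟨(C (c - δ₁⁻¹ * F₁ tj + δ₂⁻¹ * F₂ tj) : ℝ[X]) + C δ₁⁻¹ * antiderivative P₁
      - C δ₂⁻¹ * antiderivative P₂, ?_, fun t ht => ?_⟩
  · have h₁ := natDegree_antiderivative_le P₁
    have h₂ := natDegree_antiderivative_le P₂
    refine (natDegree_sub_le _ _).trans (max_le (natDegree_add_le_of_degree_le ?_ ?_) ?_)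
    · simp only [natDegree_C, zero_le]
    · exact (natDegree_C_mul_le _ _).trans (by omega)
    · exact (natDegree_C_mul_le _ _).trans (by omega)
  · rw [hg t ht, integral_eq_localRepPrimitive_sub hA hB hU hV hf₁ ht,
      integral_eq_localRepPrimitive_sub hA hB hU hV hf₂ ht]
    simp only [F₁, F₂, localRepPrimitive, eval_add, eval_sub, eval_mul, eval_C]
    ring

/-- The inductive step of the GB-spline local-representation recurrence: integrating
the combination `Φ = c + δ₁⁻¹ ∫ f₁ − δ₂⁻¹ ∫ f₂` of local representations
`fᵢ = Pᵢ + aᵢ·A + bᵢ·B` yields a local representation in terms of the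
antiderivatives `U`, `V` of `A`, `B`, with polynomial part of one higher degree. -/
theorem gb_recurrence_step (tj tj1 : ℝ) (h : tj < tj1)
    (A B U V : ℝ → ℝ)
    (hA : ContinuousOn A (Set.Icc tj tj1))
    (hB : ContinuousOn B (Set.Icc tj tj1))
    (hU : ∀ t ∈ Set.Icc tj tj1, HasDerivWithinAt U (A t) (Set.Icc tj tj1) t)
    (hV : ∀ t ∈ Set.Icc tj tj1, HasDerivWithinAt V (B t) (Set.Icc tj tj1) t)
    (P₁ P₂ : Polynomial ℝ) (a₁ b₁ a₂ b₂ c : ℝ) (δ₁ δ₂ : ℝ)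
    (hδ₁ : δ₁ ≠ 0) (hδ₂ : δ₂ ≠ 0)
    (f₁ f₂ g : ℝ → ℝ)
    (hf₁ : ∀ s ∈ Set.Icc tj tj1, f₁ s = P₁.eval s + a₁ * A s + b₁ * B s)
    (hf₂ : ∀ s ∈ Set.Icc tj tj1, f₂ s = P₂.eval s + a₂ * A s + b₂ * B s)
    (hg : ∀ t ∈ Set.Icc tj tj1,
      g t = c + δ₁⁻¹ * (∫ s in tj..t, f₁ s) - δ₂⁻¹ * (∫ s in tj..t, f₂ s)) :
    ∃ Q : Polynomial ℝ, Q.natDegree ≤ max P₁.natDegree P₂.natDegree + 1 ∧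
      ∀ t ∈ Set.Icc tj tj1,
        g t = Q.eval t + (a₁ / δ₁ - a₂ / δ₂) * U t + (b₁ / δ₁ - b₂ / δ₂) * V t :=
  gb_recurrence_step_general tj tj1 A B U V hA hB hU hV P₁ P₂ a₁ b₁ a₂ b₂ c δ₁ δ₂ f₁ f₂ g hf₁ hf₂ hg
end
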